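/- arXiv:1302.2048 — 4 statements merged into one kernel-verified Lean document; each statement's English description precedes it below -/
import Mathlib

section
/- Let q ≥ 2 and let A be an alphabet with q elements. Let (Emb, Ext) be an (n,r)-stegoscheme over A, and suppose there is an integer T with 0 < T such that every embedding makes at most T changes, i.e. d(x, Emb(x,m)) ≤ T for all x ∈ A^n and m ∈ A^r. If moreover q·T ≤ (q−1)·n, then r/n ≤ H_q(T/n), where H_q is the q-ary entropy function. (This is an equivalent form of the paper's bound e ≤ a / H_q^{-1}(a) relating the embedding efficiency e = r/T to the relative payload a = r/n.) -/
/-! `Emb x` is injective (`Ext` inverts it) and lands in the Hamming ball of radius `T` around `x`,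
so `q ^ r` is at most the size of that ball. To bound the ball, weight each word `y` by
`∏ i, w (y i)`, where `w` gives mass `1 - T/n` to `x i` and `T/(n(q-1))` to each other symbol.
The weights sum to `1`, and since `T/(n(q-1)) ≤ 1 - T/n` (which is `q T ≤ (q-1) n`), each word
of the ball weighs at least `(T/(n(q-1)))^T (1 - T/n)^(n-T) = q^(-n H_q(T/n))`. -/

/-- The `q`-ary entropy function (base-`q` logarithms), with the
convention `logb q 0 = 0` so that `Hq q 0 = 0`. -/
noncomputable def Hq (q : ℕ) (x : ℝ) : ℝ :=
  x * Real.logb q (q - 1) - x * Real.logb q x - (1 - x) * Real.logb q (1 - x)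

open Finset Real

lemma Hq_eq_neg_logb_div {q : ℕ} (hq : 1 < q) {x : ℝ} (hx : x ≠ 0) :
    Hq q x = -(x * logb q (x / (q - 1)) + (1 - x) * logb q (1 - x)) := by
  have hq0 : (q : ℝ) - 1 ≠ 0 := sub_ne_zero.2 (by exact_mod_cast hq.ne')
  rw [Hq, logb_div hx hq0]
  ring

lemma logb_pow_mul_pow_eq_neg_mul_Hq {q n T : ℕ} (hq : 1 < q) (hT : 0 < T) (hTn : T < n) :
    logb q (((T : ℝ) / n / (q - 1)) ^ T * (1 - T / n) ^ (n - T)) = -(n * Hq q (T / n)) := by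
  have hq0 : (0 : ℝ) < q - 1 := by rw [sub_pos]; exact_mod_cast hq
  have hn : (0 : ℝ) < n := by exact_mod_cast hT.trans hTn
  have hs : (0 : ℝ) < 1 - T / n := sub_pos.2 <| (div_lt_one hn).2 (by exact_mod_cast hTn)
  have hnt : (n : ℝ) * (T / n) = T := mul_div_cancel₀ _ hn.ne'
  rw [logb_mul (by positivity) (by positivity), logb_pow, logb_pow, Nat.cast_sub hTn.le,
    Hq_eq_neg_logb_div hq (by positivity)]
  linear_combination (logb q (1 - T / n) - logb q (T / n / (q - 1))) * hnt

lemma pow_mul_pow_sub_le_pow_mul_pow_sub {p s : ℝ} (hp : 0 ≤ p) (hps : p ≤ s) {d T n : ℕ}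
    (hdT : d ≤ T) (hTn : T ≤ n) : p ^ T * s ^ (n - T) ≤ p ^ d * s ^ (n - d) := by
  have hs : 0 ≤ s := hp.trans hps
  obtain ⟨k, rfl⟩ := Nat.exists_eq_add_of_le hdT
  calc p ^ (d + k) * s ^ (n - (d + k)) = p ^ d * (p ^ k * s ^ (n - (d + k))) := by ring
    _ ≤ p ^ d * (s ^ k * s ^ (n - (d + k))) := by gcongr
    _ = p ^ d * s ^ (n - d) := by rw [← pow_add]; congr 2; omega

section HammingBall

variable {ι α : Type*} [Fintype ι]

lemma prod_ite_eq_eq_pow_hammingDist [DecidableEq α] {R : Type*} [CommMonoid R] (x y : ι → α)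
    (p s : R) :
    ∏ i, (if y i = x i then s else p) =
      p ^ hammingDist x y * s ^ (Fintype.card ι - hammingDist x y) := by
  have hcard := card_filter_add_card_filter_not (s := univ) (fun i ↦ y i = x i)
  rw [prod_ite, prod_const, prod_const, mul_comm, hammingDist]
  simp only [ne_comm (a := x _), ne_eq, card_univ] at hcard ⊢
  congr 2
  omega

variable [DecidableEq ι] [Fintype α] [DecidableEq α]

lemma card_le_card_hammingBall {M : Type*} [Fintype M] {f : M → ι → α}
    (hf : Function.Injective f) (x : ι → α) {T : ℕ} (hfT : ∀ m, hammingDist x (f m) ≤ T) :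
    Fintype.card M ≤ #{y | hammingDist x y ≤ T} :=
  card_le_card_of_injOn f (fun m _ ↦ by simpa using hfT m) hf.injOn

lemma card_hammingBall_mul_le_one (x : ι → α) {T : ℕ} (hT : T ≤ Fintype.card ι) {p s : ℝ}
    (hp : 0 ≤ p) (hps : p ≤ s) (hsum : s + (Fintype.card α - 1) * p = 1) :
    #{y | hammingDist x y ≤ T} * (p ^ T * s ^ (Fintype.card ι - T)) ≤ 1 := by
  set B : Finset (ι → α) := {y | hammingDist x y ≤ T}
  set w : ι → α → ℝ := fun i a ↦ if a = x i then s else p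
  have hw_nonneg : ∀ i a, 0 ≤ w i a := fun i a ↦ by
    simp only [w]; split_ifs <;> linarith
  have hw_sum : ∀ i, ∑ a, w i a = 1 := fun i ↦ by
    have : ∀ a, w i a = p + if a = x i then s - p else 0 := fun a ↦ by
      simp only [w]; split_ifs <;> ring
    simp only [this, sum_add_distrib, sum_const, card_univ, nsmul_eq_mul, sum_ite_eq', mem_univ,
      if_true]
    linarith
  calc #B * (p ^ T * s ^ (Fintype.card ι - T))
      = ∑ y ∈ B, p ^ T * s ^ (Fintype.card ι - T) := by
        rw [sum_const, nsmul_eq_mul]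
    _ ≤ ∑ y ∈ B, ∏ i, w i (y i) := sum_le_sum fun y hy ↦ by
        rw [prod_ite_eq_eq_pow_hammingDist]
        exact pow_mul_pow_sub_le_pow_mul_pow_sub hp hps (mem_filter.1 hy).2 hT
    _ ≤ ∑ y : ι → α, ∏ i, w i (y i) :=
        sum_le_sum_of_subset_of_nonneg (subset_univ _) fun y _ _ ↦
          prod_nonneg fun i _ ↦ hw_nonneg i _
    _ = 1 := by rw [← Fintype.prod_sum, prod_congr rfl fun i _ ↦ hw_sum i, prod_const_one]

theorem logb_card_hammingBall_le (x : ι → α) (hα : 1 < Fintype.card α) {T : ℕ} (hT : 0 < T)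
    (hTn : Fintype.card α * T ≤ (Fintype.card α - 1) * Fintype.card ι) :
    logb (Fintype.card α) #{y | hammingDist x y ≤ T} ≤
      Fintype.card ι * Hq (Fintype.card α) (T / Fintype.card ι) := by
  set n := Fintype.card ι
  set q := Fintype.card α
  have hn : 0 < n := Nat.pos_of_ne_zero (by rintro h; simp [h] at hTn; omega)
  have hTlt : T < n := Nat.lt_of_mul_lt_mul_left (a := q) <|
    hTn.trans_lt (Nat.mul_lt_mul_of_pos_right (by omega) hn)
  have hq1 : (1 : ℝ) < q := by exact_mod_cast hα
  have hq0 : (0 : ℝ) < q - 1 := sub_pos.2 hq1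
  set t : ℝ := T / n
  have hqt : q * t ≤ q - 1 := by
    have := (Nat.cast_le (α := ℝ)).2 hTn
    push_cast [Nat.cast_sub hα.le] at this
    rw [mul_div_assoc', div_le_iff₀ (by positivity)]
    linarith
  set p := t / (q - 1)
  set s := 1 - t
  have hp : 0 < p := by positivity
  have hs : 0 < s := sub_pos.2 <| (div_lt_one (by positivity)).2 (by exact_mod_cast hTlt)
  have hps : p ≤ s := by rw [div_le_iff₀ hq0]; linarith
  have hsum : s + (q - 1) * p = 1 := by rw [mul_div_cancel₀ _ hq0.ne']; ring
  have hB : (0 : ℝ) < #{y | hammingDist x y ≤ T} := by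
    exact_mod_cast card_pos.2 ⟨x, by simp⟩
  have hball : #{y | hammingDist x y ≤ T} * (p ^ T * s ^ (n - T)) ≤ 1 :=
    card_hammingBall_mul_le_one x hTlt.le hp.le hps hsum
  have hlogb : logb q (p ^ T * s ^ (n - T)) = -(n * Hq q t) :=
    logb_pow_mul_pow_eq_neg_mul_Hq hα hT hTlt
  have hlog := logb_nonpos hq1 (by positivity) hball
  rw [logb_mul hB.ne' (by positivity), hlogb] at hlog
  linarith

end HammingBall

/-- For an `(n,r)`-stegoscheme over a `q`-ary alphabet in which every embedding makes at
most `T > 0` changes, if `q·T ≤ (q−1)·n` then `r/n ≤ H_q(T/n)`. -/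
theorem stegoscheme_payload_le_entropy
    {A : Type*} [Fintype A] [DecidableEq A] {q n r T : ℕ}
    (hq : 2 ≤ q) (hcard : Fintype.card A = q)
    (Emb : (Fin n → A) → (Fin r → A) → (Fin n → A))
    (Ext : (Fin n → A) → (Fin r → A))
    (hsteg : ∀ x m, Ext (Emb x m) = m)
    (hT : 0 < T)
    (hchanges : ∀ x m, hammingDist x (Emb x m) ≤ T)
    (hTn : q * T ≤ (q - 1) * n) :
    (r : ℝ) / n ≤ Hq q ((T : ℝ) / n) := by
  subst hcard
  have : Nonempty A := Fintype.card_pos_iff.1 (by omega)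
  set x : Fin n → A := Classical.arbitrary _
  have hn : 0 < n := Nat.pos_of_ne_zero (by rintro rfl; simp at hTn; omega)
  have hq1 : (1 : ℝ) < Fintype.card A := by exact_mod_cast hq
  have hball := card_le_card_hammingBall (Function.LeftInverse.injective (hsteg x)) x (hchanges x)
  rw [div_le_iff₀' (by positivity)]
  calc (r : ℝ) = logb (Fintype.card A) (Fintype.card (Fin r → A)) := by
        rw [Fintype.card_fun, Fintype.card_fin, Nat.cast_pow, logb_pow, logb_self_eq_one hq1,
          mul_one]
    _ ≤ logb (Fintype.card A) #{y | hammingDist x y ≤ T} :=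
        logb_le_logb_of_le hq1 (by positivity) (by exact_mod_cast hball)
    _ ≤ n * Hq (Fintype.card A) (T / n) := by
        simpa using logb_card_hammingBall_le x (by omega) hT (by simpa using hTn)
end

section
/- Let q ≥ 1 and let A be an alphabet with q elements. Let (Emb, Ext) be an (n,r)-stegoscheme over A such that d(x, Emb(x,m)) ≤ T for all x ∈ A^n and m ∈ A^r. Then q^r ≤ Σ_{j=0}^{T} C(n,j)·(q−1)^j, i.e. the number of messages is at most the volume of the Hamming ball of radius T in A^n. (This is the combinatorial core of the upper bound on embedding efficiency: each fiber Ext^{-1}(m) must be a covering code of radius at most T.) -/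
/-- For an `(n,r)`-stegoscheme over a `q`-ary alphabet (`q ≥ 1`) in which every embedding
makes at most `T` changes, the number `q^r` of messages is at most the volume of a Hamming
ball of radius `T` in `A^n`. -/
theorem stegoscheme_sphere_covering_bound
    {A : Type*} [Fintype A] [DecidableEq A] {q n r T : ℕ}
    (hq : 1 ≤ q) (hcard : Fintype.card A = q)
    (Emb : (Fin n → A) → (Fin r → A) → (Fin n → A))
    (Ext : (Fin n → A) → (Fin r → A))
    (hsteg : ∀ x m, Ext (Emb x m) = m)
    (hchanges : ∀ x m, hammingDist x (Emb x m) ≤ T) :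
    q ^ r ≤ ∑ j ∈ Finset.range (T + 1), Nat.choose n j * (q - 1) ^ j := by
  classical
  have hA : Nonempty A := Fintype.card_pos_iff.mp (by rw [hcard]; exact hq)
  obtain ⟨a⟩ := hA
  set x : Fin n → A := fun _ => a with hx
  -- Step 1: q^r ≤ card of the Hamming ball of radius T around x
  have h1 : q ^ r ≤ Fintype.card {y : Fin n → A // hammingDist x y ≤ T} := by
    have hinj : Function.Injective
        (fun m : Fin r → A => (⟨Emb x m, hchanges x m⟩ : {y // hammingDist x y ≤ T})) := by
      intro m1 m2 h
      have h' : Emb x m1 = Emb x m2 := congrArg Subtype.val h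
      have := congrArg Ext h'
      rwa [hsteg, hsteg] at this
    have := Fintype.card_le_of_injective _ hinj
    calc q ^ r = Fintype.card (Fin r → A) := by
            rw [Fintype.card_fun, hcard, Fintype.card_fin]
      _ ≤ _ := this
  refine h1.trans ?_
  -- Step 2: inject the ball into a sigma type
  let B := Σ s : {s : Finset (Fin n) // s.card ≤ T},
    ∀ i : (s.1 : Finset (Fin n)), {b : A // b ≠ x i.1}
  have hdist : ∀ y : Fin n → A,
      hammingDist x y = (Finset.univ.filter (fun i => y i ≠ x i)).card := by
    intro y
    unfold hammingDist
    congr 1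
    ext i
    simp [ne_comm]
  let ψ : {y : Fin n → A // hammingDist x y ≤ T} → B := fun y =>
    ⟨⟨Finset.univ.filter (fun i => y.1 i ≠ x i), by rw [← hdist]; exact y.2⟩,
      fun i => ⟨y.1 i.1, by have := i.2; simp only [Finset.mem_filter] at this; exact this.2⟩⟩
  have hψ : Function.Injective ψ := by
    have hrecon : ∀ y : {y : Fin n → A // hammingDist x y ≤ T},
        (fun i => if h : i ∈ (ψ y).1.1 then ((ψ y).2 ⟨i, h⟩).1 else x i) = y.1 := by
      intro y
      funext i
      by_cases h : i ∈ (ψ y).1.1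
      · simp [h, ψ]
      · simp only [h, dif_neg, not_false_iff]
        simp only [ψ, Finset.mem_filter, Finset.mem_univ, true_and, not_not] at h
        exact h.symm
    intro y1 y2 h
    apply Subtype.ext
    rw [← hrecon y1, ← hrecon y2, h]
  have h2 := Fintype.card_le_of_injective ψ hψ
  refine h2.trans ?_
  -- Step 3: compute the cardinality of B
  have hfib : ∀ s : {s : Finset (Fin n) // s.card ≤ T},
      Fintype.card (∀ i : (s.1 : Finset (Fin n)), {b : A // b ≠ x i.1})
        = (q - 1) ^ s.1.card := by
    intro s
    rw [Fintype.card_pi]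
    have : ∀ i : (s.1 : Finset (Fin n)), Fintype.card {b : A // b ≠ x i.1} = q - 1 := by
      intro i
      have := Fintype.card_subtype_compl (fun b : A => b = x i.1)
      simp only [Fintype.card_subtype_eq] at this
      calc Fintype.card {b : A // b ≠ x i.1}
          = Fintype.card {b : A // ¬ b = x i.1} := rfl
        _ = q - 1 := by rw [this, hcard]
    calc ∏ i : (s.1 : Finset (Fin n)), Fintype.card {b : A // b ≠ x i.1}
        = ∏ _i : (s.1 : Finset (Fin n)), (q - 1) := by
          exact Finset.prod_congr rfl (fun i _ => this i)
      _ = (q - 1) ^ s.1.card := by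
          rw [Finset.prod_const, Finset.card_univ, Fintype.card_coe]
  have hcardB : Fintype.card B
      = ∑ s ∈ Finset.univ.filter (fun s : Finset (Fin n) => s.card ≤ T),
          (q - 1) ^ s.card := by
    rw [Fintype.card_sigma]
    have heq : ∑ s : {s : Finset (Fin n) // s.card ≤ T},
        Fintype.card (∀ i : (s.1 : Finset (Fin n)), {b : A // b ≠ x i.1})
        = ∑ s : {s : Finset (Fin n) // s.card ≤ T}, (q - 1) ^ s.1.card :=
      Finset.sum_congr rfl (fun s _ => hfib s)
    rw [heq]
    exact (Finset.sum_subtype (Finset.univ.filter (fun s : Finset (Fin n) => s.card ≤ T))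
      (by intro s; simp) (fun s => (q - 1) ^ s.card)).symm
  rw [hcardB]
  -- Step 4: group by cardinality
  have hgroup :
      ∑ j ∈ Finset.range (T + 1),
        ∑ s ∈ (Finset.univ.filter (fun s : Finset (Fin n) => s.card ≤ T)).filter
          (fun s => s.card = j), (q - 1) ^ s.card
      = ∑ s ∈ Finset.univ.filter (fun s : Finset (Fin n) => s.card ≤ T),
          (q - 1) ^ s.card := by
    apply Finset.sum_fiberwise_of_maps_to
    intro s hs
    simp only [Finset.mem_filter, Finset.mem_univ, true_and] at hs
    simp [Finset.mem_range, Nat.lt_succ_iff, hs]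
  rw [← hgroup]
  apply le_of_eq
  apply Finset.sum_congr rfl
  intro j hj
  simp only [Finset.mem_range, Nat.lt_succ_iff] at hj
  have hset : (Finset.univ.filter (fun s : Finset (Fin n) => s.card ≤ T)).filter
      (fun s => s.card = j) = Finset.powersetCard j (Finset.univ : Finset (Fin n)) := by
    ext s
    simp only [Finset.mem_filter, Finset.mem_univ, true_and,
      Finset.mem_powersetCard_univ]
    constructor
    · exact fun h => h.2
    · intro h; exact ⟨h ▸ hj, h⟩
  rw [hset]
  calc ∑ s ∈ Finset.powersetCard j Finset.univ, (q - 1) ^ s.card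
      = ∑ _s ∈ Finset.powersetCard j (Finset.univ : Finset (Fin n)), (q - 1) ^ j :=
        Finset.sum_congr rfl (fun s hs => by
          rw [Finset.mem_powersetCard_univ] at hs; rw [hs])
    _ = n.choose j * (q - 1) ^ j := by
        rw [Finset.sum_const, Finset.card_powersetCard, Finset.card_univ, Fintype.card_fin,
          smul_eq_mul]
end

section
/- Let C be a linear code in F_q^n (a linear subspace, in particular nonempty) with covering radius ρ. Fix an integer j ≥ 0 and define: Y_j = {y ∈ F_q^n : d(y,C) ≥ ρ − j}; E_j = {y − c : y ∈ Y_j, c ∈ C, d(y,c) = d(y,C)}; and P_j = ∩_{e ∈ E_j} supp(e), the set of coordinate positions lying in the support of every vector of E_j. Let C'_j be the code obtained by puncturing C at the positions of P_j. Then the covering radius ρ'_j of C'_j satisfies ρ'_j ≤ max{ρ − j − 1, ρ − |P_j|}. -/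
open scoped Classical

/-- Hamming distance from a vector to a code (a set of vectors). -/
noncomputable def distToCode {ι F : Type*} [Fintype ι] [DecidableEq F]
    (y : ι → F) (C : Set (ι → F)) : ℕ :=
  sInf ((fun c => hammingDist y c) '' C)

/-- The covering radius of a code `C ⊆ F^ι`. -/
noncomputable def coveringRadius {ι F : Type*} [Fintype ι] [DecidableEq ι]
    [Fintype F] [DecidableEq F] (C : Set (ι → F)) : ℕ :=
  Finset.univ.sup fun y : ι → F => distToCode y C

lemma distToCode_le {ι F : Type*} [Fintype ι] [DecidableEq F]
    (y c : ι → F) {C : Set (ι → F)} (hc : c ∈ C) :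
    distToCode y C ≤ hammingDist y c :=
  Nat.sInf_le ⟨c, hc, rfl⟩

lemma exists_closest {ι F : Type*} [Fintype ι] [DecidableEq F]
    (y : ι → F) {C : Set (ι → F)} (hC : C.Nonempty) :
    ∃ c ∈ C, hammingDist y c = distToCode y C := by
  have h : ((fun c => hammingDist y c) '' C).Nonempty := hC.image _
  obtain ⟨c, hc, hcd⟩ := Nat.sInf_mem h
  exact ⟨c, hc, hcd⟩

/-- Puncturing bound: if `C` is a linear code in `F_q^n` with covering radius `ρ`,
`Y_j = {y : d(y,C) ≥ ρ − j}`, `E_j` the set of corresponding minimum-distance error vectors,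
and `P_j` the set of positions lying in the support of every vector of `E_j`, then the
covering radius of the code obtained by puncturing `C` at `P_j` is at most
`max (ρ − j − 1) (ρ − |P_j|)`. -/
theorem coveringRadius_punctured_le
    {F : Type*} [Field F] [Fintype F] [DecidableEq F] {n : ℕ}
    (C : Submodule F (Fin n → F)) (ρ : ℕ)
    (hρ : ρ = coveringRadius (C : Set (Fin n → F)))
    (j : ℕ)
    (Y : Set (Fin n → F))
    (hY : Y = {y | (ρ : ℤ) - j ≤ (distToCode y (C : Set (Fin n → F)) : ℤ)})
    (E : Set (Fin n → F))
    (hE : E = {e | ∃ y ∈ Y, ∃ c ∈ (C : Set (Fin n → F)),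
        hammingDist y c = distToCode y (C : Set (Fin n → F)) ∧ e = y - c})
    (P : Set (Fin n))
    (hP : P = {i | ∀ e ∈ E, e i ≠ 0}) :
    (coveringRadius ((fun y (i : {i : Fin n // i ∉ P}) => y i.1) ''
        (C : Set (Fin n → F))) : ℤ)
      ≤ max ((ρ : ℤ) - j - 1) ((ρ : ℤ) - Nat.card P) := by
  set C' : Set ({i : Fin n // i ∉ P} → F) :=
    (fun y (i : {i : Fin n // i ∉ P}) => y i.1) '' (C : Set (Fin n → F)) with hC'
  have hne : Nonempty ({i : Fin n // i ∉ P} → F) := inferInstance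
  obtain ⟨y₀, -, hsup⟩ := Finset.exists_mem_eq_sup (Finset.univ : Finset ({i : Fin n // i ∉ P} → F))
    Finset.univ_nonempty (fun y => distToCode y C')
  rw [coveringRadius, hsup]
  -- extend y₀ to a full vector
  set y : Fin n → F := fun i => if h : i ∉ P then y₀ ⟨i, h⟩ else 0 with hy
  have hrestr : ∀ i : {i : Fin n // i ∉ P}, y i.1 = y₀ i := fun i => dif_pos i.2
  have hCne : (C : Set (Fin n → F)).Nonempty := ⟨0, C.zero_mem⟩
  obtain ⟨c, hc, hcd⟩ := exists_closest y hCne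
  have hdρ : distToCode y (C : Set (Fin n → F)) ≤ ρ := by
    rw [hρ, coveringRadius]
    exact Finset.le_sup (f := fun z => distToCode z (C : Set (Fin n → F))) (Finset.mem_univ y)
  set c' : {i : Fin n // i ∉ P} → F := fun i => c i.1 with hc'
  have hc'mem : c' ∈ C' := ⟨c, hc, rfl⟩
  have hle : distToCode y₀ C' ≤ hammingDist y₀ c' := distToCode_le y₀ c' hc'mem
  -- counting
  set A : Finset (Fin n) := Finset.univ.filter (fun i => y i ≠ c i) with hA
  have hAcard : hammingDist y c = A.card := rfl
  have hsplit : (A.filter (· ∈ P)).card + (A.filter (¬ · ∈ P)).card = A.card :=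
    Finset.card_filter_add_card_filter_not _
  have hdist' : hammingDist y₀ c' = (A.filter (¬ · ∈ P)).card := by
    rw [hammingDist]
    refine Finset.card_bij (fun i _ => i.1) ?_ ?_ ?_
    · intro a ha
      simp only [hA, Finset.mem_filter, Finset.mem_univ, true_and] at ha ⊢
      refine ⟨?_, a.2⟩
      rw [hrestr a]; exact ha
    · intro a _ b _ hab; exact Subtype.ext hab
    · intro b hb
      simp only [hA, Finset.mem_filter, Finset.mem_univ, true_and] at hb
      refine ⟨⟨b, hb.2⟩, ?_, rfl⟩
      simp only [Finset.mem_filter, Finset.mem_univ, true_and]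
      show y₀ ⟨b, hb.2⟩ ≠ c' ⟨b, hb.2⟩
      rw [← hrestr ⟨b, hb.2⟩]; exact hb.1
  by_cases hYmem : y ∈ Y
  · -- e = y - c has full support on P
    have heE : y - c ∈ E := by
      rw [hE]; exact ⟨y, hYmem, c, hc, hcd, rfl⟩
    have hPsub : ∀ i ∈ P, y i ≠ c i := by
      intro i hi
      have := hP ▸ hi
      have h2 : (y - c) i ≠ 0 := this (y - c) heE
      intro heq; apply h2; simp [heq]
    have hfil : A.filter (· ∈ P) = Finset.univ.filter (· ∈ P) := by
      ext i
      simp only [hA, Finset.mem_filter, Finset.mem_univ, true_and, and_iff_right_iff_imp]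
      exact hPsub i
    have hPcard : (A.filter (· ∈ P)).card = Nat.card P := by
      rw [hfil, Nat.card_eq_fintype_card, Fintype.card_subtype]
    have key : (hammingDist y₀ c' : ℤ) = (distToCode y (C : Set (Fin n → F)) : ℤ) - Nat.card P := by
      rw [hdist', ← hcd, hAcard]
      have := hsplit
      rw [hPcard] at this
      omega
    refine le_trans ?_ (le_max_right _ _)
    have : (distToCode y₀ C' : ℤ) ≤ (hammingDist y₀ c' : ℤ) := by exact_mod_cast hle
    rw [key] at this
    have : (distToCode y₀ C' : ℤ) ≤ (ρ : ℤ) - Nat.card P := by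
      refine this.trans ?_
      have : (distToCode y (C : Set (Fin n → F)) : ℤ) ≤ (ρ : ℤ) := by exact_mod_cast hdρ
      omega
    exact this
  · -- d(y,C) < ρ - j
    have hlt : (distToCode y (C : Set (Fin n → F)) : ℤ) ≤ (ρ : ℤ) - j - 1 := by
      rw [hY] at hYmem
      simp only [Set.mem_setOf_eq, not_le] at hYmem
      omega
    refine le_trans ?_ (le_max_left _ _)
    have h1 : hammingDist y₀ c' ≤ hammingDist y c := by
      rw [hdist', hAcard]
      exact Finset.card_filter_le _ _
    have h2 : (distToCode y₀ C' : ℤ) ≤ (hammingDist y c : ℤ) := by exact_mod_cast hle.trans h1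
    rw [hcd] at h2
    omega
end

section
/- Let C ⊆ F_q^n be a code, P a set of coordinate positions, π the projection deleting the coordinates indexed by P, and C' = π(C) the punctured code. Let t be a nonnegative integer and let dec : F_q^n → F_q^n be a decoding map for C correcting t errors, i.e. for every y ∈ F_q^n and every c ∈ C with d(y,c) ≤ t one has dec(y) = c. Then for every y' ∈ F_q^{n−|P|} and every codeword c' ∈ C' with d(c', y') ≤ t, there exists y ∈ F_q^n with π(y) = y' such that π(dec(y)) = c'. In other words, the list {π(dec(y)) : y ∈ F_q^n, π(y) = y'} returned by Algorithm 1 contains all codewords of C' within Hamming distance t of y'. -/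
open scoped Classical

/-- Correctness of the decoding algorithm for punctured codes: if `dec` decodes any word
of `F_q^n` within distance `t` of a codeword of `C` to that codeword, then for every
received word `y'` of the punctured code `C' = π(C)` and every codeword `c' ∈ C'` with
`d(c', y') ≤ t`, some lift `y` of `y'` satisfies `π(dec(y)) = c'`; i.e. the list
`{π(dec(y)) : π(y) = y'}` contains all codewords of `C'` within distance `t` of `y'`. -/
theorem punctured_decoding_correct
    {F : Type*} [Field F] [Fintype F] [DecidableEq F] {n : ℕ}
    (C : Set (Fin n → F)) (P : Set (Fin n)) (t : ℕ)
    (π : (Fin n → F) → ({i : Fin n // i ∉ P} → F))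
    (hπ : π = fun y i => y i.1)
    (dec : (Fin n → F) → (Fin n → F))
    (hdec : ∀ y c, c ∈ C → hammingDist y c ≤ t → dec y = c) :
    ∀ (y' : {i : Fin n // i ∉ P} → F), ∀ c' ∈ π '' C, hammingDist c' y' ≤ t →
      ∃ y : Fin n → F, π y = y' ∧ π (dec y) = c' := by
  intro y' c' hc' hdist
  obtain ⟨c, hcC, rfl⟩ := hc'
  subst hπ
  set y : Fin n → F := fun i => if h : i ∉ P then y' ⟨i, h⟩ else c i with hy
  have hle : hammingDist y c ≤ hammingDist (fun i => c i.1 : {i : Fin n // i ∉ P} → F) y' := by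
    unfold hammingDist
    calc (Finset.univ.filter fun i => y i ≠ c i).card
        ≤ ((Finset.univ.filter fun i : {i : Fin n // i ∉ P} => c i.1 ≠ y' i).image
            Subtype.val).card := by
          apply Finset.card_le_card
          intro i hi
          simp only [Finset.mem_filter, Finset.mem_univ, true_and, hy] at hi
          have hp : i ∉ P := by
            intro hP; exact hi (by simp [hP])
          refine Finset.mem_image.2 ⟨⟨i, hp⟩, ?_, rfl⟩
          simp only [Finset.mem_filter, Finset.mem_univ, true_and]
          intro h; exact hi (by simp [hp, h])
      _ ≤ _ := Finset.card_image_le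
  have hdec' := hdec y c hcC (hle.trans hdist)
  exact ⟨y, by funext i; simp [hy, i.2], by rw [hdec']⟩
end
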